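/- Suppose L ⊂ ℝ^d has all pairwise distances distinct and has no infinite descending chains, and let M be the unique stable matching of L. In friendly frogs on L, the position with the two frogs at x and y is a P-position if and only if {x,y} ∈ M. -/

import Mathlib

noncomputable section

/-- Points of `ℝ^d` with the Euclidean norm. -/
abbrev Pt (d : ℕ) := EuclideanSpace ℝ (Fin d)

/-- `L` has all pairwise distances distinct: the distance determines the unordered pair. -/
def DistinctDist {d : ℕ} (L : Set (Pt d)) : Prop :=
  ∀ x ∈ L, ∀ y ∈ L, ∀ z ∈ L, ∀ w ∈ L,
    x ≠ y → z ≠ w → dist x y = dist z w → (x = z ∧ y = w) ∨ (x = w ∧ y = z)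

/-- `L` has no infinite descending chains: no sequence of points of `L` whose consecutive
distances are strictly decreasing. -/
def NoDescChain {d : ℕ} (L : Set (Pt d)) : Prop :=
  ¬ ∃ c : ℕ → Pt d, (∀ n, c n ∈ L) ∧ StrictAnti (fun n => dist (c n) (c (n + 1)))

/-- `R` encodes a matching of `L` (as the symmetric relation "matched to"):
a set of unordered pairs of distinct points of `L`, each point in at most one pair. -/
def IsMatching {d : ℕ} (L : Set (Pt d)) (R : Pt d → Pt d → Prop) : Prop :=
  (∀ x y, R x y → R y x) ∧
  (∀ x y, R x y → x ∈ L ∧ y ∈ L ∧ x ≠ y) ∧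
  (∀ x y z, R x y → R x z → y = z)

/-- The matching `R` of `L` is stable: there is no pair of distinct points of `L`, not matched
to each other, each of which is unmatched or strictly farther from its partner than from
the other point. -/
def IsStable {d : ℕ} (L : Set (Pt d)) (R : Pt d → Pt d → Prop) : Prop :=
  ¬ ∃ x ∈ L, ∃ y ∈ L, x ≠ y ∧ ¬ R x y ∧
    (∀ z, R x z → dist x y < dist x z) ∧ (∀ z, R y z → dist x y < dist y z)

/-- The friendly frogs move relation on two-frog positions, which are unordered pairs of
distinct points of `L`: one of the two points is replaced by a point `z ∈ L` outside the
pair in such a way that the distance between the occupied points strictly decreases. -/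
def FFMove {d : ℕ} (L : Set (Pt d)) (p q : Sym2 (Pt d)) : Prop :=
  ∃ x y z, x ∈ L ∧ y ∈ L ∧ z ∈ L ∧ x ≠ y ∧ z ≠ x ∧ z ≠ y ∧
    dist x z < dist x y ∧ p = s(x, y) ∧ q = s(x, z)

/-!
Matched pairs satisfy the recursion that defines P-positions. A move from a matched pair breaks
it, and since each point has only one partner the new pair is unmatched. From an unmatched pair,
stability lets one frog jump to its own partner, and by distinct distances that partner is
strictly closer, so the jump is a legal move to a matched pair. The move relation is
well-founded, so the two solutions of the recursion coincide.

Well-foundedness needs an argument, because a play does not directly give a descending chain. If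
one frog never moves, the other visits infinitely many points of a bounded set; these accumulate,
and points close to an accumulation point give a descending chain. Otherwise, follow a point
until its frog jumps away and continue from the point of the frog that stayed. The distances
along this path are distances of positions further and further along the play, so they strictly
decrease.
-/

open Filter Metric

theorem exists_seq_mem_of_forall_exists {α : Type*} {S : Set α} {r : α → α → Prop} {a : α}
    (ha : a ∈ S) (h : ∀ a ∈ S, ∃ b ∈ S, r a b) :
    ∃ f : ℕ → α, (∀ n, f n ∈ S) ∧ ∀ n, r (f n) (f (n + 1)) := by
  choose! g hgS hgr using h
  have hmem : ∀ n, g^[n] a ∈ S := fun n => Set.MapsTo.iterate hgS n ha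
  refine ⟨fun n => g^[n] a, hmem, fun n => ?_⟩
  simp only [Function.iterate_succ_apply']
  exact hgr _ (hmem n)

section DescendingChain

variable {X : Type*} [MetricSpace X]

theorem exists_strictAnti_dist_of_accPt {S : Set X} {p : X} (hp : AccPt p (𝓟 S)) :
    ∃ c : ℕ → X, (∀ n, c n ∈ S) ∧ StrictAnti fun n => dist (c n) (c (n + 1)) := by
  have hnear : ∀ ε > 0, ∃ q ∈ S \ {p}, dist q p < ε := fun ε hε => by
    obtain ⟨q, ⟨hqε, hqS⟩, hqp⟩ := accPt_iff_nhds.1 hp _ (ball_mem_nhds p hε)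
    exact ⟨q, ⟨hqS, hqp⟩, hqε⟩
  obtain ⟨q₀, hq₀, -⟩ := hnear 1 one_pos
  obtain ⟨c, hcS, hc⟩ :=
    exists_seq_mem_of_forall_exists (r := fun q q' => dist q' p < dist q p / 4) hq₀
      fun q hq => hnear _ (by have := dist_pos.2 hq.2; positivity)
  refine ⟨c, fun n => (hcS n).1, strictAnti_nat_of_succ_lt fun n => ?_⟩
  -- with `rₙ = dist (c n) p` and `4 rₙ₊₁ < rₙ`, step `n` is longer than `3 rₙ₊₁`
  -- and the next one shorter than `5 rₙ₊₁ / 4`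
  have hpos := dist_pos.2 (hcS (n + 1)).2
  have h₁ := hc n
  have h₂ := hc (n + 1)
  have hlower := dist_triangle (c n) (c (n + 1)) p
  have hupper := dist_triangle_right (c (n + 1)) (c (n + 1 + 1)) p
  linarith

theorem exists_strictAnti_dist_of_isBounded_of_infinite [ProperSpace X] {S : Set X}
    (hb : Bornology.IsBounded S) (hi : S.Infinite) :
    ∃ c : ℕ → X, (∀ n, c n ∈ S) ∧ StrictAnti fun n => dist (c n) (c (n + 1)) := by
  obtain ⟨p, -, hp⟩ := hi.exists_accPt_of_subset_isCompact hb.isCompact_closure subset_closure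
  exact exists_strictAnti_dist_of_accPt hp

end DescendingChain

def frogDist {X : Type*} [PseudoMetricSpace X] : Sym2 X → ℝ :=
  Sym2.lift ⟨dist, dist_comm⟩

@[simp]
theorem frogDist_mk {X : Type*} [PseudoMetricSpace X] (x y : X) : frogDist s(x, y) = dist x y :=
  rfl

section FriendlyFrogs

variable {d : ℕ} {L : Set (Pt d)}

def ffPositions (L : Set (Pt d)) : Set (Sym2 (Pt d)) :=
  {p | ∃ x ∈ L, ∃ y ∈ L, x ≠ y ∧ p = s(x, y)}

namespace FFMove

variable {p q : Sym2 (Pt d)}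

theorem frogDist_lt (h : FFMove L p q) : frogDist q < frogDist p := by
  obtain ⟨x, y, z, -, -, -, -, -, -, hlt, rfl, rfl⟩ := h
  exact hlt

theorem mem_of_mem_left (h : FFMove L p q) {a : Pt d} (ha : a ∈ p) : a ∈ L := by
  obtain ⟨x, y, z, hx, hy, -, -, -, -, -, rfl, rfl⟩ := h
  rcases Sym2.mem_iff.1 ha with rfl | rfl <;> assumption

theorem mem_ffPositions_right (h : FFMove L p q) : q ∈ ffPositions L := by
  obtain ⟨x, y, z, hx, -, hz, -, hzx, -, -, -, rfl⟩ := h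
  exact ⟨x, hx, z, hz, hzx.symm, rfl⟩

end FFMove

section Play

variable {f : ℕ → Sym2 (Pt d)}

theorem frogDist_strictAnti_of_ffMove (hf : ∀ n, FFMove L (f n) (f (n + 1))) :
    StrictAnti fun n => frogDist (f n) :=
  strictAnti_nat_of_succ_lt fun n => (hf n).frogDist_lt

theorem NoDescChain.not_forall_mem_of_ffMove (hchain : NoDescChain L)
    (hf : ∀ n, FFMove L (f n) (f (n + 1))) (a : Pt d) : ¬ ∀ n, a ∈ f n := by
  intro ha
  choose b hb using fun n => Sym2.mem_iff_exists.1 (ha n)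
  have hdist : ∀ n, dist a (b n) = frogDist (f n) := fun n => by rw [hb n, frogDist_mk]
  have hanti : StrictAnti fun n => dist a (b n) := by
    simpa only [hdist] using frogDist_strictAnti_of_ffMove hf
  have hbounded : Bornology.IsBounded (Set.range b) := by
    refine (isBounded_closedBall (x := a) (r := frogDist (f 0))).subset ?_
    rintro _ ⟨n, rfl⟩
    rw [mem_closedBall, dist_comm, hdist]
    exact (frogDist_strictAnti_of_ffMove hf).antitone n.zero_le
  obtain ⟨c, hc, hcanti⟩ := exists_strictAnti_dist_of_isBounded_of_infinite hbounded
    (Set.infinite_range_of_injective fun m n h => hanti.injective (by simp only [h]))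
  refine hchain ⟨c, fun n => ?_, hcanti⟩
  obtain ⟨m, hm⟩ := hc n
  exact hm ▸ (hf m).mem_of_mem_left (hb m ▸ Sym2.mem_mk_right a (b m))

theorem NoDescChain.exists_mem_not_mem_succ (hchain : NoDescChain L)
    (hf : ∀ n, FFMove L (f n) (f (n + 1))) {k : ℕ} {a : Pt d} (ha : a ∈ f k) :
    ∃ n ≥ k, a ∈ f n ∧ a ∉ f (n + 1) := by
  by_contra! hstay
  refine hchain.not_forall_mem_of_ffMove (f := fun n => f (k + n)) (fun n => hf (k + n)) a
    fun n => ?_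
  induction n with
  | zero => exact ha
  | succ n ih => exact hstay (k + n) (by omega) ih

theorem NoDescChain.exists_dist_eq_frogDist (hchain : NoDescChain L)
    (hf : ∀ n, FFMove L (f n) (f (n + 1))) {k : ℕ} {a : Pt d} (ha : a ∈ f k) :
    ∃ n ≥ k, ∃ b ∈ f (n + 1), dist a b = frogDist (f n) := by
  obtain ⟨n, hkn, han, han'⟩ := hchain.exists_mem_not_mem_succ hf ha
  obtain ⟨x, y, z, -, -, -, -, -, -, -, hp, hq⟩ := hf n
  have hx : x ∈ f (n + 1) := hq ▸ Sym2.mem_mk_left x z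
  have hay : a = y := (Sym2.mem_iff.1 (hp ▸ han)).resolve_left (by rintro rfl; exact han' hx)
  exact ⟨n, hkn, x, hx, by rw [hp, hay, frogDist_mk, dist_comm]⟩

end Play

theorem NoDescChain.wellFounded_flip_ffMove (hchain : NoDescChain L) :
    WellFounded (flip (FFMove L)) := by
  rw [wellFounded_iff_isEmpty_descending_chain]
  refine ⟨fun ⟨f, hf⟩ => hchain ?_⟩
  obtain ⟨x, y, -, -, -, -, -, -, -, -, hp, -⟩ := hf 0
  let S : Set (ℕ × Pt d) := {s | s.2 ∈ f s.1}
  have hstep : ∀ s ∈ S, ∃ t ∈ S,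
      frogDist (f t.1) < dist s.2 t.2 ∧ dist s.2 t.2 ≤ frogDist (f s.1) := by
    intro s hs
    obtain ⟨n, hkn, b, hb, hab⟩ := hchain.exists_dist_eq_frogDist hf hs
    refine ⟨(n + 1, b), hb, ?_, ?_⟩ <;> rw [hab]
    · exact frogDist_strictAnti_of_ffMove hf n.lt_succ_self
    · exact (frogDist_strictAnti_of_ffMove hf).antitone hkn
  have hx : (0, x) ∈ S := show x ∈ f 0 from hp ▸ Sym2.mem_mk_left x y
  obtain ⟨g, hgS, hg⟩ := exists_seq_mem_of_forall_exists hx hstep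
  refine ⟨fun n => (g n).2, fun n => (hf _).mem_of_mem_left (hgS n), ?_⟩
  exact strictAnti_nat_of_succ_lt fun n => ((hg (n + 1)).2.trans_lt (hg n).1)

end FriendlyFrogs

def IsPPositions {α : Type*} (mv : α → α → Prop) (S : Set α) (P : α → Prop) : Prop :=
  ∀ p ∈ S, P p ↔ ∀ q, mv p q → ¬ P q

theorem IsPPositions.unique {α : Type*} {mv : α → α → Prop} {S : Set α} {P Q : α → Prop}
    (hwf : WellFounded (flip mv)) (hS : ∀ p ∈ S, ∀ q, mv p q → q ∈ S)
    (hP : IsPPositions mv S P) (hQ : IsPPositions mv S Q) : ∀ p ∈ S, P p ↔ Q p := by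
  intro p
  induction p using hwf.induction with
  | _ p ih =>
    intro hp
    rw [hP p hp, hQ p hp]
    exact forall₂_congr fun q hq => not_congr (ih q hq (hS p hp q hq))

section StableMatching

variable {d : ℕ} {L : Set (Pt d)} {R : Pt d → Pt d → Prop}

theorem IsMatching.symm (hM : IsMatching L R) : Std.Symm R :=
  ⟨hM.1⟩

theorem IsMatching.not_mem_fromRel_of_ffMove (hM : IsMatching L R) {p q : Sym2 (Pt d)}
    (hp : p ∈ Sym2.fromRel hM.symm) (hmove : FFMove L p q) : q ∉ Sym2.fromRel hM.symm := by
  obtain ⟨x, y, z, -, -, -, -, -, hzy, -, rfl, rfl⟩ := hmove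
  rw [Sym2.fromRel_prop] at hp ⊢
  exact fun hxz => hzy (hM.2.2 x z y hxz hp)

theorem IsMatching.ffMove_to_partner (hdist : DistinctDist L) (hM : IsMatching L R)
    {x y z : Pt d} (hx : x ∈ L) (hy : y ∈ L) (hxy : x ≠ y) (hnR : ¬ R x y) (hxz : R x z)
    (hle : dist x z ≤ dist x y) : FFMove L s(x, y) s(x, z) := by
  obtain ⟨-, hz, hxz'⟩ := hM.2.1 x z hxz
  have hzy : z ≠ y := by rintro rfl; exact hnR hxz
  have hne : dist x z ≠ dist x y := fun h => by
    rcases hdist x hx z hz x hx y hy hxz' hxy h with ⟨-, h⟩ | ⟨h, -⟩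
    exacts [hzy h, hxy h]
  exact ⟨x, y, z, hx, hy, hz, hxy, hxz'.symm, hzy, hle.lt_of_ne hne, rfl, rfl⟩

theorem IsStable.exists_ffMove_mem_fromRel (hdist : DistinctDist L) (hM : IsMatching L R)
    (hS : IsStable L R) {x y : Pt d} (hx : x ∈ L) (hy : y ∈ L) (hxy : x ≠ y)
    (hnR : ¬ R x y) : ∃ q, FFMove L s(x, y) q ∧ q ∈ Sym2.fromRel hM.symm := by
  have hblock :
      ¬ ((∀ z, R x z → dist x y < dist x z) ∧ ∀ z, R y z → dist x y < dist y z) :=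
    fun h => hS ⟨x, hx, y, hy, hxy, hnR, h⟩
  rw [not_and_or] at hblock
  push Not at hblock
  rcases hblock with ⟨z, hxz, hle⟩ | ⟨z, hyz, hle⟩
  · exact ⟨_, hM.ffMove_to_partner hdist hx hy hxy hnR hxz hle, Sym2.fromRel_prop.2 hxz⟩
  · rw [dist_comm x y] at hle
    rw [Sym2.eq_swap]
    exact ⟨_, hM.ffMove_to_partner hdist hy hx hxy.symm (fun h => hnR (hM.1 y x h)) hyz hle,
      Sym2.fromRel_prop.2 hyz⟩

theorem IsStable.isPPositions_fromRel (hdist : DistinctDist L) (hM : IsMatching L R)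
    (hS : IsStable L R) :
    IsPPositions (FFMove L) (ffPositions L) (· ∈ Sym2.fromRel hM.symm) := by
  rintro _ ⟨x, hx, y, hy, hxy, rfl⟩
  refine ⟨fun hp q hmove => hM.not_mem_fromRel_of_ffMove hp hmove, fun hall => ?_⟩
  by_contra hnR
  obtain ⟨q, hmove, hq⟩ :=
    hS.exists_ffMove_mem_fromRel hdist hM hx hy hxy (mt Sym2.fromRel_prop.2 hnR)
  exact hall q hmove hq

end StableMatching

/-- let `L` have distinct distances and no infinite descending chains, let `R`
be its (unique) stable matching, and let `P` be the P-position predicate of friendly frogs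
on `L`, i.e. any predicate satisfying the defining fixpoint equation (which determines it
uniquely since the move relation is well-founded).  Then a two-frog position `{x,y}` is a
P-position if and only if `x` and `y` are matched to each other. -/
theorem ff_ppositions_eq_stable_matching {d : ℕ} (L : Set (Pt d))
    (hdist : DistinctDist L) (hchain : NoDescChain L)
    (R : Pt d → Pt d → Prop) (hM : IsMatching L R) (hS : IsStable L R)
    (P : Sym2 (Pt d) → Prop)
    (hP : ∀ x ∈ L, ∀ y ∈ L, x ≠ y →
      (P s(x, y) ↔ ∀ q, FFMove L s(x, y) q → ¬ P q)) :
    ∀ x ∈ L, ∀ y ∈ L, x ≠ y → (P s(x, y) ↔ R x y) := by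
  intro x hx y hy hxy
  have hPpos : IsPPositions (FFMove L) (ffPositions L) P := by
    rintro _ ⟨x, hx, y, hy, hxy, rfl⟩
    exact hP x hx y hy hxy
  rw [← Sym2.fromRel_prop (sym := hM.symm)]
  exact hPpos.unique hchain.wellFounded_flip_ffMove (fun _ _ _ h => h.mem_ffPositions_right)
    (hS.isPPositions_fromRel hdist hM) _ ⟨x, hx, y, hy, hxy, rfl⟩
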